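/- There exist unit vectors a, a', b, b' : Fin 3 → ℝ such that the Bell parameter E(a,b) − E(a,b') + E(a',b') + E(a',b), where E(a,b) = ⟨ψ⁻, ((a·σ) ⊗ (b·σ)) ψ⁻⟩, has absolute value 2√2; in particular quantum mechanics violates the CHSH bound 2. -/

import Mathlib

open Matrix Kronecker

noncomputable section

/-- The Pauli matrix σ₁. -/
def pauli1 : Matrix (Fin 2) (Fin 2) ℂ := !![0, 1; 1, 0]

/-- The Pauli matrix σ₂. -/
def pauli2 : Matrix (Fin 2) (Fin 2) ℂ := !![0, -Complex.I; Complex.I, 0]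

/-- The Pauli matrix σ₃. -/
def pauli3 : Matrix (Fin 2) (Fin 2) ℂ := !![1, 0; 0, -1]

/-- `a·σ = Σᵢ aᵢ σᵢ` for a real direction vector `a`. -/
def dotPauli (a : Fin 3 → ℝ) : Matrix (Fin 2) (Fin 2) ℂ :=
  ((a 0 : ℝ) : ℂ) • pauli1 + ((a 1 : ℝ) : ℂ) • pauli2 + ((a 2 : ℝ) : ℂ) • pauli3

/-- The singlet state `ψ⁻ = (|↑↓⟩ − |↓↑⟩)/√2`. -/
def singlet : Fin 2 × Fin 2 → ℂ := fun s =>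
  if s = (0, 1) then ((1 / Real.sqrt 2 : ℝ) : ℂ)
  else if s = (1, 0) then ((-(1 / Real.sqrt 2) : ℝ) : ℂ) else 0

/-- The expectation value `⟨ψ, M ψ⟩ = Σ_{s,t} conj(ψ s) · M s t · ψ t`. -/
def expval (ψ : Fin 2 × Fin 2 → ℂ) (M : Matrix (Fin 2 × Fin 2) (Fin 2 × Fin 2) ℂ) : ℂ :=
  ∑ s, ∑ t, (starRingEnd ℂ) (ψ s) * M s t * ψ t

/-! For the singlet state the correlation is `E(a,b) = -a ⬝ᵥ b`, so the Bell parameter equals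
`-(a ⬝ᵥ (b - b') + a' ⬝ᵥ (b + b'))`. Taking `a ⊥ a'` and `b, b'` at 45° to them makes `b - b'`
and `b + b'` parallel to `a` and `a'` with length `√2` each, which gives Tsirelson's value `2√2`. -/

theorem expval_singlet_kronecker_dotPauli (a b : Fin 3 → ℝ) :
    expval singlet (dotPauli a ⊗ₖ dotPauli b) = -((a ⬝ᵥ b : ℝ) : ℂ) := by
  have hsqrt : Real.sqrt 2 * Real.sqrt 2 = 2 := Real.mul_self_sqrt zero_le_two
  simp only [expval, singlet, dotPauli, pauli1, pauli2, pauli3, dotProduct, Fin.sum_univ_three,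
    Fintype.sum_prod_type, Fin.sum_univ_two, kroneckerMap_apply, Matrix.add_apply, Matrix.smul_apply,
    smul_eq_mul, Prod.ext_iff, Fin.zero_eq_one_iff, Fin.one_eq_zero_iff]
  norm_num [Complex.ext_iff]
  constructor
  · linear_combination (-(a 0 * b 0 + a 1 * b 1 + a 2 * b 2) / 2) * hsqrt
  · ring

theorem norm_singlet_bell_parameter (a a' b b' : Fin 3 → ℝ) :
    ‖expval singlet (dotPauli a ⊗ₖ dotPauli b) - expval singlet (dotPauli a ⊗ₖ dotPauli b') +
        expval singlet (dotPauli a' ⊗ₖ dotPauli b') + expval singlet (dotPauli a' ⊗ₖ dotPauli b)‖ =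
      |a ⬝ᵥ (b - b') + a' ⬝ᵥ (b + b')| := by
  simp only [expval_singlet_kronecker_dotPauli, dotProduct_sub, dotProduct_add]
  rw [← Real.norm_eq_abs, ← Complex.norm_real, ← norm_neg]
  push_cast
  ring_nf

theorem exists_unit_vectors_dotProduct_eq_neg_two_sqrt_two :
    ∃ a a' b b' : Fin 3 → ℝ,
      a 0 ^ 2 + a 1 ^ 2 + a 2 ^ 2 = 1 ∧ a' 0 ^ 2 + a' 1 ^ 2 + a' 2 ^ 2 = 1 ∧
      b 0 ^ 2 + b 1 ^ 2 + b 2 ^ 2 = 1 ∧ b' 0 ^ 2 + b' 1 ^ 2 + b' 2 ^ 2 = 1 ∧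
      a ⬝ᵥ (b - b') + a' ⬝ᵥ (b + b') = -(2 * Real.sqrt 2) := by
  have hsq : (Real.sqrt 2 / 2) ^ 2 = 1 / 2 := by
    rw [div_pow, Real.sq_sqrt zero_le_two]; norm_num
  refine ⟨![1, 0, 0], ![0, 0, 1], ![-(Real.sqrt 2 / 2), 0, -(Real.sqrt 2 / 2)],
    ![Real.sqrt 2 / 2, 0, -(Real.sqrt 2 / 2)], by simp, by simp, ?_, ?_, ?_⟩ <;>
    simp only [dotProduct, Fin.sum_univ_three, Pi.sub_apply, Pi.add_apply, cons_val_zero,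
      cons_val_one, cons_val_two, head_cons, tail_cons]
  · linarith [neg_sq (Real.sqrt 2 / 2)]
  · linarith [neg_sq (Real.sqrt 2 / 2)]
  · ring

/-- there exist unit vectors a, a', b, b' such that the Bell parameter for the
singlet state has absolute value 2√2, which exceeds the CHSH bound 2. -/
theorem stmt8 : ∃ a a' b b' : Fin 3 → ℝ,
    a 0 ^ 2 + a 1 ^ 2 + a 2 ^ 2 = 1 ∧
    a' 0 ^ 2 + a' 1 ^ 2 + a' 2 ^ 2 = 1 ∧
    b 0 ^ 2 + b 1 ^ 2 + b 2 ^ 2 = 1 ∧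
    b' 0 ^ 2 + b' 1 ^ 2 + b' 2 ^ 2 = 1 ∧
    ‖expval singlet ((dotPauli a) ⊗ₖ (dotPauli b)) -
        expval singlet ((dotPauli a) ⊗ₖ (dotPauli b')) +
        expval singlet ((dotPauli a') ⊗ₖ (dotPauli b')) +
        expval singlet ((dotPauli a') ⊗ₖ (dotPauli b))‖ = 2 * Real.sqrt 2 ∧
    2 < ‖expval singlet ((dotPauli a) ⊗ₖ (dotPauli b)) -
        expval singlet ((dotPauli a) ⊗ₖ (dotPauli b')) +
        expval singlet ((dotPauli a') ⊗ₖ (dotPauli b')) +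
        expval singlet ((dotPauli a') ⊗ₖ (dotPauli b))‖ := by
  obtain ⟨a, a', b, b', ha, ha', hb, hb', hdot⟩ :=
    exists_unit_vectors_dotProduct_eq_neg_two_sqrt_two
  have hbell : |a ⬝ᵥ (b - b') + a' ⬝ᵥ (b + b')| = 2 * Real.sqrt 2 := by
    rw [hdot, abs_neg, abs_of_pos (by positivity)]
  refine ⟨a, a', b, b', ha, ha', hb, hb', ?_, ?_⟩ <;> rw [norm_singlet_bell_parameter, hbell]
  linarith [Real.one_lt_sqrt_two]
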